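/- Let T = R_{2r+1}(P^1, …, P^{2r+1}) be the composition of tournaments P^1, …, P^{2r+1} over the highly regular tournament R_{2r+1}, with r ≥ 1, and let χ(P^i) = k_i for each i. Suppose there are indices s and t such that k_s > k_t, k_t ≥ k_ℓ for every ℓ ∈ {1, …, 2r+1} \ {s, t}, and k_s ≥ 2k_t. Then χ(T) = k_s. -/

import Mathlib

/-- A tournament: an irreflexive relation such that for every pair of distinct
vertices exactly one of the two directions holds. -/
def IsTournament {V : Type*} (rel : V → V → Prop) : Prop :=
  (∀ v, ¬ rel v v) ∧ ∀ u v : V, u ≠ v → (rel u v ↔ ¬ rel v u)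

/-- A set `S` is acyclic (transitive) in a tournament `rel`: the relation restricted
to `S` is transitive; for a tournament this is equivalent to the restriction being a
strict linear order, i.e. to the induced subtournament having no directed cycle. -/
def AcyclicIn {V : Type*} (rel : V → V → Prop) (S : Set V) : Prop :=
  ∀ a ∈ S, ∀ b ∈ S, ∀ c ∈ S, rel a b → rel b c → rel a c

/-- The (acyclic) chromatic number: the least `k` such that there is a coloring of the
vertices with `k` colors all of whose color classes are acyclic sets. -/
noncomputable def chromaticNumber {V : Type*} (rel : V → V → Prop) : ℕ :=
  sInf {k : ℕ | ∃ c : V → Fin k, ∀ i : Fin k, AcyclicIn rel {v | c v = i}}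

/-- The dimension of the acyclic complex of a tournament: the maximum size of an
acyclic set, minus one. -/
noncomputable def acyDim {V : Type*} (rel : V → V → Prop) : ℕ :=
  sSup {n : ℕ | ∃ S : Finset V, AcyclicIn rel ↑S ∧ S.card = n} - 1

/-- The edge relation of the highly regular tournament `R_{2r+1}` on `ZMod (2r+1)`:
`i → j` iff `j ≡ i + l (mod 2r+1)` for some `1 ≤ l ≤ r`. -/
def hrRel (r : ℕ) (i j : ZMod (2 * r + 1)) : Prop :=
  ∃ l : ℕ, 1 ≤ l ∧ l ≤ r ∧ j = i + (l : ZMod (2 * r + 1))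

/-- The edge relation of the composition `R_{2q+1}(P^1, …, P^{2q+1})` of the tournaments
`relP i` over the highly regular tournament `R_{2q+1}`: inside a block use the block's
relation, between different blocks use the highly regular relation on the indices. -/
def compTournRel (q : ℕ) {V : ZMod (2 * q + 1) → Type*} (relP : ∀ i, V i → V i → Prop)
    (u v : Σ i, V i) : Prop :=
  (∃ h : u.1 = v.1, relP v.1 (h ▸ u.2) v.2) ∨ (u.1 ≠ v.1 ∧ hrRel q u.1 v.1)


/-!
The lower bound holds because `P^s` is an induced subtournament of `T`. For the upper bound,
colour `P^s` optimally with `k_s` colours, the blocks on the arc `s + 1, …, s + r` with colours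
from `[0, k_t)` and the blocks on the opposite arc `s + r + 1, …, s + 2r` with colours from
`[k_t, 2 k_t)`. A colour below `k_t` then occurs only on the arc `s, …, s + r` and any other colour
only on the arc `s - r, …, s`. Both arcs are transitive in `R_{2r+1}`, and a colouring of a
composition is acyclic as soon as it is acyclic on every block and every colour occurs only on a
transitive set of blocks.
-/

def IsAcyclicColoring {V : Type*} (rel : V → V → Prop) {n : ℕ} (c : V → Fin n) : Prop :=
  ∀ i : Fin n, AcyclicIn rel {v | c v = i}

section Coloring

variable {V W : Type*} {rel : V → V → Prop} {n : ℕ}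

lemma AcyclicIn.mono {S T : Set V} (hT : AcyclicIn rel T) (hST : S ⊆ T) : AcyclicIn rel S :=
  fun a ha b hb c hc => hT a (hST ha) b (hST hb) c (hST hc)

lemma isAcyclicColoring_of_injective {c : V → Fin n} (hc : Function.Injective c) :
    IsAcyclicColoring rel c := by
  rintro i a rfl b hb d hd hab _
  obtain rfl : b = a := hc hb
  obtain rfl : d = b := hc hd
  exact hab

lemma IsAcyclicColoring.comp_injective {m : ℕ} {c : V → Fin n} (hc : IsAcyclicColoring rel c)
    {e : Fin n → Fin m} (he : Function.Injective e) : IsAcyclicColoring rel (e ∘ c) := by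
  rintro i a rfl b hb d hd
  exact hc (c a) a rfl b (he hb) d (he hd)

lemma IsAcyclicColoring.comap {rel' : W → W → Prop} {c : V → Fin n}
    (hc : IsAcyclicColoring rel c) (f : W → V) (hf : ∀ a b, rel' a b ↔ rel (f a) (f b)) :
    IsAcyclicColoring rel' (c ∘ f) := by
  intro i a ha b hb d hd hab hbd
  rw [hf] at hab hbd ⊢
  exact hc i (f a) ha (f b) hb (f d) hd hab hbd

lemma chromaticNumber_le_of_isAcyclicColoring {c : V → Fin n} (hc : IsAcyclicColoring rel c) :
    chromaticNumber rel ≤ n :=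
  Nat.sInf_le ⟨c, hc⟩

lemma exists_isAcyclicColoring_chromaticNumber [Finite V] (rel : V → V → Prop) :
    ∃ c : V → Fin (chromaticNumber rel), IsAcyclicColoring rel c :=
  Nat.sInf_mem (s := {k | ∃ c : V → Fin k, IsAcyclicColoring rel c})
    ⟨Nat.card V, Finite.equivFin V, isAcyclicColoring_of_injective (Finite.equivFin V).injective⟩

lemma chromaticNumber_le_of_rel_iff [Finite V] {rel' : W → W → Prop} (f : W → V)
    (hf : ∀ a b, rel' a b ↔ rel (f a) (f b)) : chromaticNumber rel' ≤ chromaticNumber rel := by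
  obtain ⟨c, hc⟩ := exists_isAcyclicColoring_chromaticNumber rel
  exact chromaticNumber_le_of_isAcyclicColoring (hc.comap f hf)

end Coloring

section HighlyRegular

variable {r : ℕ}

lemma hrRel_iff_val {i j : ZMod (2 * r + 1)} :
    hrRel r i j ↔ 1 ≤ (j - i).val ∧ (j - i).val ≤ r := by
  constructor
  · rintro ⟨l, hl1, hlr, rfl⟩
    rw [add_sub_cancel_left, ZMod.val_cast_of_lt (by omega)]
    exact ⟨hl1, hlr⟩
  · rintro ⟨h1, hr⟩
    exact ⟨(j - i).val, h1, hr, by rw [ZMod.natCast_zmod_val, add_sub_cancel]⟩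

lemma hrRel_irrefl (i : ZMod (2 * r + 1)) : ¬ hrRel r i i := by
  simp [hrRel_iff_val]

def hrArc (r : ℕ) (a : ZMod (2 * r + 1)) : Set (ZMod (2 * r + 1)) :=
  {i | (i - a).val ≤ r}

-- Along an arc the offsets from its start add up without wrapping around.
lemma acyclicIn_hrArc (a : ZMod (2 * r + 1)) : AcyclicIn (hrRel r) (hrArc r a) := by
  have step : ∀ x y, x ∈ hrArc r a → hrRel r x y → (y - a).val = (x - a).val + (y - x).val := by
    intro x y hx hxy
    rw [hrRel_iff_val] at hxy
    rw [← ZMod.val_add_of_lt (by simp only [hrArc, Set.mem_ofPred_eq] at hx; omega)]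
    ring_nf
  intro x hx y hy z hz hxy hyz
  have hy_val := step x y hx hxy
  have hz_val := step y z hy hyz
  simp only [hrArc, Set.mem_ofPred_eq] at hx hy hz
  rw [hrRel_iff_val] at hxy hyz ⊢
  rw [show z - x = (z - a) - (x - a) by ring, ZMod.val_sub (by omega)]
  omega

lemma mem_hrArc_sub_of_notMem_hrArc {i s : ZMod (2 * r + 1)} (h : i ∉ hrArc r s) :
    i ∈ hrArc r (s - r) := by
  simp only [hrArc, Set.mem_ofPred_eq, not_le] at h ⊢
  have hr : ((r : ZMod (2 * r + 1))).val = r := ZMod.val_cast_of_lt (by omega)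
  rw [show i - (s - r) = (i - s) + r by ring, ZMod.val_add_of_le (by omega), hr]
  have := ZMod.val_lt (i - s)
  omega

lemma self_mem_hrArc_sub (s : ZMod (2 * r + 1)) : s ∈ hrArc r (s - r) := by
  simp [hrArc, ZMod.val_cast_of_lt (show r < 2 * r + 1 by omega)]

end HighlyRegular

section Composition

variable {q : ℕ} {V : ZMod (2 * q + 1) → Type*} (relP : ∀ i, V i → V i → Prop)

lemma compTournRel_mk_mk_self (i : ZMod (2 * q + 1)) (x y : V i) :
    compTournRel q relP ⟨i, x⟩ ⟨i, y⟩ ↔ relP i x y :=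
  ⟨by rintro (⟨_, h⟩ | ⟨h, _⟩); exacts [h, absurd rfl h], fun h => .inl ⟨rfl, h⟩⟩

lemma compTournRel_mk_mk_of_ne {i j : ZMod (2 * q + 1)} (x : V i) (y : V j) (hij : i ≠ j) :
    compTournRel q relP ⟨i, x⟩ ⟨j, y⟩ ↔ hrRel q i j :=
  ⟨by rintro (⟨h, _⟩ | ⟨_, h⟩); exacts [absurd h hij, h], fun h => .inr ⟨hij, h⟩⟩

lemma chromaticNumber_le_chromaticNumber_compTournRel [∀ i, Finite (V i)]
    (i : ZMod (2 * q + 1)) :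
    chromaticNumber (relP i) ≤ chromaticNumber (compTournRel q relP) :=
  chromaticNumber_le_of_rel_iff (Sigma.mk i) fun x y => (compTournRel_mk_mk_self relP i x y).symm

variable {relP}

lemma isAcyclicColoring_compTournRel {n : ℕ} {c : (Σ i, V i) → Fin n}
    (hblock : ∀ i, IsAcyclicColoring (relP i) (fun x => c ⟨i, x⟩))
    (hsupp : ∀ col, AcyclicIn (hrRel q) {i | ∃ x, c ⟨i, x⟩ = col}) :
    IsAcyclicColoring (compTournRel q relP) c := by
  rintro col ⟨i, x⟩ hx ⟨j, y⟩ hy ⟨l, z⟩ hz hxy hyz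
  by_cases hij : i = j <;> by_cases hjl : j = l
  · subst hij hjl
    rw [compTournRel_mk_mk_self] at hxy hyz ⊢
    exact hblock i col x hx y hy z hz hxy hyz
  · subst hij
    rwa [compTournRel_mk_mk_of_ne _ _ _ hjl] at hyz ⊢
  · subst hjl
    rwa [compTournRel_mk_mk_of_ne _ _ _ hij] at hxy ⊢
  · rw [compTournRel_mk_mk_of_ne _ _ _ hij] at hxy
    rw [compTournRel_mk_mk_of_ne _ _ _ hjl] at hyz
    have hil := hsupp col i ⟨x, hx⟩ j ⟨y, hy⟩ l ⟨z, hz⟩ hxy hyz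
    have hne : i ≠ l := by rintro rfl; exact hrRel_irrefl i hil
    rwa [compTournRel_mk_mk_of_ne _ _ _ hne]

lemma chromaticNumber_compTournRel_le [∀ i, Finite (V i)] (o : ZMod (2 * q + 1) → ℕ) {n : ℕ}
    (hle : ∀ i, o i + chromaticNumber (relP i) ≤ n)
    (hacyc : ∀ col, AcyclicIn (hrRel q) {i | o i ≤ col ∧ col < o i + chromaticNumber (relP i)}) :
    chromaticNumber (compTournRel q relP) ≤ n := by
  choose g hg using fun i => exists_isAcyclicColoring_chromaticNumber (relP i)
  let shift (i) : Fin (chromaticNumber (relP i)) → Fin n :=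
    fun a => ⟨o i + a, by have := hle i; omega⟩
  have hshift (i) : Function.Injective (shift i) := fun a b h => by
    simpa [shift, Fin.ext_iff] using h
  refine chromaticNumber_le_of_isAcyclicColoring (c := fun u => shift u.1 (g u.1 u.2)) ?_
  refine isAcyclicColoring_compTournRel (fun i => (hg i).comp_injective (hshift i)) fun col => ?_
  refine (hacyc col).mono ?_
  rintro i ⟨x, rfl⟩
  simp [shift]

theorem stmt11_general (r : ℕ) (V : ZMod (2 * r + 1) → Type)
    [∀ i, Fintype (V i)]
    (relP : ∀ i, V i → V i → Prop)
    (k : ZMod (2 * r + 1) → ℕ) (hk : ∀ i, chromaticNumber (relP i) = k i)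
    (s t : ZMod (2 * r + 1))
    (hmax : ∀ l, l ≠ s → l ≠ t → k l ≤ k t)
    (h2 : 2 * k t ≤ k s) :
    chromaticNumber (compTournRel r relP) = k s := by
  have hkt (i) (his : i ≠ s) : k i ≤ k t := by
    by_cases hit : i = t
    · exact hit ▸ le_rfl
    · exact hmax i his hit
  have hs : s ∈ hrArc r s := by simp [hrArc]
  refine le_antisymm ?_ (hk s ▸ chromaticNumber_le_chromaticNumber_compTournRel relP s)
  classical
  refine chromaticNumber_compTournRel_le (fun i => if i ∈ hrArc r s then 0 else k t)
    (fun i => ?_) (fun col => ?_) <;> simp only [hk]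
  · by_cases his : i = s
    · simp [his, hs]
    · have := hkt i his
      split_ifs <;> omega
  · rcases lt_or_ge col (k t) with hcol | hcol
    · refine (acyclicIn_hrArc s).mono fun i hi => ?_
      by_contra h
      simp only [h, if_false, Set.mem_ofPred_eq] at hi
      omega
    · refine (acyclicIn_hrArc (s - (r : ZMod (2 * r + 1)))).mono fun i hi => ?_
      by_cases his : i = s
      · exact his ▸ self_mem_hrArc_sub s
      by_cases h : i ∈ hrArc r s
      · simp only [h, if_true, Set.mem_ofPred_eq] at hi
        have := hkt i his
        omega
      · exact mem_hrArc_sub_of_notMem_hrArc h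

/-- Let `T = R_{2r+1}(P^1, …, P^{2r+1})` with `r ≥ 1` and `χ(P^i) = k_i`. If there are
indices `s, t` with `k_s > k_t`, `k_t ≥ k_ℓ` for all other `ℓ`, and `k_s ≥ 2 k_t`,
then `χ(T) = k_s`. -/
theorem stmt11 (r : ℕ) (hr : 1 ≤ r) (V : ZMod (2 * r + 1) → Type)
    [∀ i, Fintype (V i)] [∀ i, Nonempty (V i)]
    (relP : ∀ i, V i → V i → Prop) (htour : ∀ i, IsTournament (relP i))
    (k : ZMod (2 * r + 1) → ℕ) (hk : ∀ i, chromaticNumber (relP i) = k i)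
    (s t : ZMod (2 * r + 1)) (hst : k t < k s)
    (hmax : ∀ l, l ≠ s → l ≠ t → k l ≤ k t)
    (h2 : 2 * k t ≤ k s) :
    chromaticNumber (compTournRel r relP) = k s :=
  stmt11_general r V relP k hk s t hmax h2
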